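/- Let A₁, A₂ be Hermitian dA×dA complex matrices such that every common eigenvector of A₁ and A₂ corresponds to eigenvalue 0 for both (i.e., if a nonzero α satisfies A₁α = a₁α and A₂α = a₂α then a₁ = a₂ = 0), and similarly let B₁, B₂ be Hermitian dB×dB matrices such that every common eigenvector of B₁ and B₂ corresponds to eigenvalue 0 for both. Assume A₁ ⊗ B₁ ≠ 0 or A₂ ⊗ B₂ ≠ 0. Then for all real k₁, k₂ with k₁·k₂ ≠ 0, setting K = k₁·(A₁ ⊗ B₁) + k₂·(A₂ ⊗ B₂), either λ_min(K) < λ⊗_min(K) or λ_max(K) > λ⊗_max(K); that is, W_min(K) = K − λ⊗_min(K)·I is a witness or W_max(K) = K − λ⊗_max(K)·I is the negative of a witness. -/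

import Mathlib

open Matrix
open scoped Kronecker

/-- The Kronecker (tensor) product of two vectors: `(α ⊗ β)(i,j) = α i * β j`. -/
def vecKron {dA dB : ℕ} (α : Fin dA → ℂ) (β : Fin dB → ℂ) : Fin dA × Fin dB → ℂ :=
  fun p => α p.1 * β p.2

/-- The minimum (real) eigenvalue of a matrix. For a Hermitian matrix this is the least
eigenvalue. -/
noncomputable def minEig {n : Type*} [Fintype n] (K : Matrix n n ℂ) : ℝ :=
  sInf {μ : ℝ | ∃ v : n → ℂ, v ≠ 0 ∧ K.mulVec v = (μ : ℂ) • v}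

/-- The maximum (real) eigenvalue of a matrix. -/
noncomputable def maxEig {n : Type*} [Fintype n] (K : Matrix n n ℂ) : ℝ :=
  sSup {μ : ℝ | ∃ v : n → ℂ, v ≠ 0 ∧ K.mulVec v = (μ : ℂ) • v}

/-- `λ⊗_min(K)`: the infimum of `⟨v, Kv⟩` over product unit vectors `v`. -/
noncomputable def prodMin {dA dB : ℕ} (K : Matrix (Fin dA × Fin dB) (Fin dA × Fin dB) ℂ) : ℝ :=
  sInf {r : ℝ | ∃ (α : Fin dA → ℂ) (β : Fin dB → ℂ),
    star (vecKron α β) ⬝ᵥ vecKron α β = 1 ∧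
    (star (vecKron α β) ⬝ᵥ K.mulVec (vecKron α β)).re = r}

/-- `λ⊗_max(K)`: the supremum of `⟨v, Kv⟩` over product unit vectors `v`. -/
noncomputable def prodMax {dA dB : ℕ} (K : Matrix (Fin dA × Fin dB) (Fin dA × Fin dB) ℂ) : ℝ :=
  sSup {r : ℝ | ∃ (α : Fin dA → ℂ) (β : Fin dB → ℂ),
    star (vecKron α β) ⬝ᵥ vecKron α β = 1 ∧
    (star (vecKron α β) ⬝ᵥ K.mulVec (vecKron α β)).re = r}

/-!
The infimum defining `λ⊗_min(K)` is attained at a product unit vector `α ⊗ β`. If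
`λ⊗_min(K) ≤ λ_min(K)`, then, `K - λ_min(K)` being positive semidefinite, `α ⊗ β` is an
eigenvector of `K` for `λ = λ_min(K)`. Comparing coefficients of
`k₁ A₁α ⊗ B₁β + k₂ A₂α ⊗ B₂β = λ α ⊗ β` along a basis of `span {α, A₁α, A₂α}` shows that either
`λ = 0` outright, or `β` is a joint eigenvector of `B₁, B₂` whose eigenvalue pair determines `λ`,
so that `λ = 0` again. Applied to `K` and `-K`, the failure of both inequalities gives
`λ_min(K) = λ_max(K) = 0`, hence `K = 0`. Then `A₂` is a multiple of `A₁` (or conversely), and an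
eigenvector of the nonzero Hermitian `A₁` for a nonzero eigenvalue is a joint eigenvector with a
nonzero eigenvalue.
-/

open scoped ComplexOrder

section JointEigenvalues

variable {n : Type*} [Fintype n] {M₁ M₂ : Matrix n n ℂ}

def HasOnlyZeroJointEigenvalues (M₁ M₂ : Matrix n n ℂ) : Prop :=
  ∀ (v : n → ℂ) (a₁ a₂ : ℂ), v ≠ 0 → M₁ *ᵥ v = a₁ • v → M₂ *ᵥ v = a₂ • v → a₁ = 0 ∧ a₂ = 0

theorem HasOnlyZeroJointEigenvalues.symm (h : HasOnlyZeroJointEigenvalues M₁ M₂) :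
    HasOnlyZeroJointEigenvalues M₂ M₁ :=
  fun v a₂ a₁ hv h₂ h₁ => (h v a₁ a₂ hv h₁ h₂).symm

theorem HasOnlyZeroJointEigenvalues.eq_zero_of_smul_mulVec_eq
    (h : HasOnlyZeroJointEigenvalues M₁ M₂) {v : n → ℂ} (hv : v ≠ 0) {t s l : ℂ}
    (h₁ : t • M₁ *ᵥ v = l • v) (h₂ : M₂ *ᵥ v = s • M₁ *ᵥ v) : l = 0 := by
  by_cases ht : t = 0
  · simpa [ht, eq_comm (a := (0 : n → ℂ)), hv] using h₁
  have e₁ : M₁ *ᵥ v = (l / t) • v := by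
    rw [div_eq_inv_mul, mul_smul, ← h₁, smul_smul, inv_mul_cancel₀ ht, one_smul]
  have e₂ : M₂ *ᵥ v = (s * (l / t)) • v := by rw [h₂, e₁, smul_smul]
  simpa [ht] using (h v _ _ hv e₁ e₂).1

theorem HasOnlyZeroJointEigenvalues.ne_smul (h : HasOnlyZeroJointEigenvalues M₁ M₂)
    (hM₁ : M₁.IsHermitian) (hne : M₁ ≠ 0) (t : ℂ) : M₂ ≠ t • M₁ := by
  rintro rfl
  obtain ⟨v, s, hs, hv, hMv⟩ := hM₁.exists_eigenvector_of_ne_zero hne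
  rw [← Complex.coe_smul] at hMv
  have hM₂v : (t • M₁) *ᵥ v = (t * s) • v := by rw [smul_mulVec, hMv, smul_smul]
  exact hs (by exact_mod_cast (h v _ _ hv hMv hM₂v).1)

end JointEigenvalues

section VecKron

variable {dA dB : ℕ}

theorem kronecker_mulVec_vecKron (A : Matrix (Fin dA) (Fin dA) ℂ)
    (B : Matrix (Fin dB) (Fin dB) ℂ) (α : Fin dA → ℂ) (β : Fin dB → ℂ) :
    (A ⊗ₖ B) *ᵥ vecKron α β = vecKron (A *ᵥ α) (B *ᵥ β) := by
  funext p
  simp only [mulVec, dotProduct, vecKron, kroneckerMap_apply, Fintype.sum_prod_type,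
    Finset.sum_mul_sum]
  exact Finset.sum_congr rfl fun _ _ => Finset.sum_congr rfl fun _ _ => by ring

theorem star_vecKron_dotProduct_vecKron (α α' : Fin dA → ℂ) (β β' : Fin dB → ℂ) :
    star (vecKron α β) ⬝ᵥ vecKron α' β' = (star α ⬝ᵥ α') * (star β ⬝ᵥ β') := by
  simp only [dotProduct, vecKron, Pi.star_apply, star_mul', Fintype.sum_prod_type,
    Finset.sum_mul_sum]
  exact Finset.sum_congr rfl fun _ _ => Finset.sum_congr rfl fun _ _ => by ring

@[simp]
theorem zero_vecKron (β : Fin dB → ℂ) : vecKron (0 : Fin dA → ℂ) β = 0 := by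
  funext p
  simp [vecKron]

theorem vecKron_ne_zero {α : Fin dA → ℂ} {β : Fin dB → ℂ} (hα : α ≠ 0) (hβ : β ≠ 0) :
    vecKron α β ≠ 0 := by
  obtain ⟨i, hi⟩ := Function.ne_iff.mp hα
  obtain ⟨j, hj⟩ := Function.ne_iff.mp hβ
  exact Function.ne_iff.mpr ⟨(i, j), mul_ne_zero hi hj⟩

theorem eq_zero_of_sum_vecKron_eq_zero {ι : Type*} [Fintype ι] {x : ι → Fin dA → ℂ}
    (hx : LinearIndependent ℂ x) {y : ι → Fin dB → ℂ} (h : ∑ i, vecKron (x i) (y i) = 0)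
    (i : ι) : y i = 0 := by
  funext j
  refine Fintype.linearIndependent_iff.mp hx (fun i => y i j) ?_ i
  funext p
  simpa [vecKron, Finset.sum_apply, mul_comm] using congrFun h (p, j)

end VecKron

section ProductEigenvector

variable {dA dB : ℕ} {A₁ A₂ : Matrix (Fin dA) (Fin dA) ℂ} {B₁ B₂ : Matrix (Fin dB) (Fin dB) ℂ}
  {α : Fin dA → ℂ} {β : Fin dB → ℂ} {k₁ k₂ l : ℂ}

open Submodule in
theorem prodEigenvalue_eq_zero_of_mem_span_pair (hB : HasOnlyZeroJointEigenvalues B₁ B₂)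
    (hk₁ : k₁ ≠ 0) (hα : α ≠ 0) (hβ : β ≠ 0)
    (h₁ : A₁ *ᵥ α ∉ ℂ ∙ α) (h₂ : A₂ *ᵥ α ∈ span ℂ {α, A₁ *ᵥ α})
    (h : k₁ • vecKron (A₁ *ᵥ α) (B₁ *ᵥ β) + k₂ • vecKron (A₂ *ᵥ α) (B₂ *ᵥ β)
      = l • vecKron α β) : l = 0 := by
  obtain ⟨c, d, hcd⟩ := mem_span_pair.mp h₂
  have hind : LinearIndependent ℂ ![α, A₁ *ᵥ α] :=
    (LinearIndependent.pair_iff' hα).mpr fun a ha => h₁ (mem_span_singleton.mpr ⟨a, ha⟩)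
  have hsum : ∑ i, vecKron (![α, A₁ *ᵥ α] i)
      (![(k₂ * c) • B₂ *ᵥ β - l • β, k₁ • B₁ *ᵥ β + (k₂ * d) • B₂ *ᵥ β] i) = 0 := by
    rw [Fin.sum_univ_two]
    funext p
    have hp := congrFun h p
    have hc := congrFun hcd p.1
    simp only [vecKron, cons_val_zero, cons_val_one, Pi.add_apply, Pi.sub_apply, Pi.smul_apply,
      smul_eq_mul, Pi.zero_apply] at hp hc ⊢
    linear_combination hp + k₂ * (B₂ *ᵥ β) p.2 * hc
  have e₁ : (k₂ * c) • B₂ *ᵥ β - l • β = 0 := eq_zero_of_sum_vecKron_eq_zero hind hsum 0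
  have e₂ : k₁ • B₁ *ᵥ β + (k₂ * d) • B₂ *ᵥ β = 0 := eq_zero_of_sum_vecKron_eq_zero hind hsum 1
  refine hB.symm.eq_zero_of_smul_mulVec_eq hβ (sub_eq_zero.mp e₁) (s := -(k₂ * d) / k₁) ?_
  rw [neg_div, neg_smul, div_eq_inv_mul, mul_smul, ← smul_neg, ← eq_neg_of_add_eq_zero_left e₂,
    smul_smul, inv_mul_cancel₀ hk₁, one_smul]

open Submodule in
theorem prodEigenvalue_eq_zero_of_notMem_span_pair (hβ : β ≠ 0)
    (h₁ : A₁ *ᵥ α ∉ ℂ ∙ α) (h₂ : A₂ *ᵥ α ∉ span ℂ {α, A₁ *ᵥ α})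
    (h : k₁ • vecKron (A₁ *ᵥ α) (B₁ *ᵥ β) + k₂ • vecKron (A₂ *ᵥ α) (B₂ *ᵥ β)
      = l • vecKron α β) : l = 0 := by
  have hα : α ≠ 0 := by rintro rfl; simp at h₁
  have hind : LinearIndependent ℂ ![A₂ *ᵥ α, A₁ *ᵥ α, α] := by
    refine linearIndependent_finCons.mpr ⟨LinearIndependent.pair_symm_iff.mp ?_, ?_⟩
    · exact (LinearIndependent.pair_iff' hα).mpr fun a ha => h₁ (mem_span_singleton.mpr ⟨a, ha⟩)
    · rwa [range_cons_cons_empty, Set.pair_comm]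
  have hsum : ∑ i, vecKron (![A₂ *ᵥ α, A₁ *ᵥ α, α] i)
      (![k₂ • B₂ *ᵥ β, k₁ • B₁ *ᵥ β, -(l • β)] i) = 0 := by
    rw [Fin.sum_univ_three]
    funext p
    have hp := congrFun h p
    simp only [vecKron, cons_val_zero, cons_val_one, cons_val_two, tail_cons, head_cons,
      Pi.add_apply, Pi.neg_apply, Pi.smul_apply, smul_eq_mul, Pi.zero_apply] at hp ⊢
    linear_combination hp
  have : -(l • β) = 0 := eq_zero_of_sum_vecKron_eq_zero hind hsum 2
  simpa [hβ] using this

open Submodule in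
theorem prodEigenvalue_eq_zero (hA : HasOnlyZeroJointEigenvalues A₁ A₂)
    (hB : HasOnlyZeroJointEigenvalues B₁ B₂) (hk₁ : k₁ ≠ 0) (hk₂ : k₂ ≠ 0)
    (hα : α ≠ 0) (hβ : β ≠ 0)
    (h : (k₁ • A₁ ⊗ₖ B₁ + k₂ • A₂ ⊗ₖ B₂) *ᵥ vecKron α β = l • vecKron α β) : l = 0 := by
  rw [add_mulVec, smul_mulVec, smul_mulVec, kronecker_mulVec_vecKron,
    kronecker_mulVec_vecKron] at h
  by_cases h₁ : A₁ *ᵥ α ∈ ℂ ∙ α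
  · by_cases h₂ : A₂ *ᵥ α ∈ ℂ ∙ α
    · obtain ⟨a₁, ha₁⟩ := mem_span_singleton.mp h₁
      obtain ⟨a₂, ha₂⟩ := mem_span_singleton.mp h₂
      obtain ⟨rfl, rfl⟩ := hA α a₁ a₂ hα ha₁.symm ha₂.symm
      simpa [← ha₁, ← ha₂, vecKron_ne_zero hα hβ, eq_comm (a := (0 : Fin dA × Fin dB → ℂ))]
        using h
    · refine prodEigenvalue_eq_zero_of_mem_span_pair hB.symm hk₂ hα hβ h₂
        (span_mono (by simp) h₁) (by rwa [add_comm])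
  · by_cases h₂ : A₂ *ᵥ α ∈ span ℂ {α, A₁ *ᵥ α}
    · exact prodEigenvalue_eq_zero_of_mem_span_pair hB hk₁ hα hβ h₁ h₂ h
    · exact prodEigenvalue_eq_zero_of_notMem_span_pair hβ h₁ h₂ h

end ProductEigenvector

section Eigenvalues

variable {n : Type*} [Fintype n]

theorem finite_setOf_eigenvalue (K : Matrix n n ℂ) :
    {μ : ℝ | ∃ v : n → ℂ, v ≠ 0 ∧ K *ᵥ v = (μ : ℂ) • v}.Finite := by
  classical
  refine ((Module.End.finite_hasEigenvalue (toLin' K)).preimage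
    Complex.ofReal_injective.injOn).subset ?_
  rintro μ ⟨v, hv, hKv⟩
  exact Module.End.hasEigenvalue_of_hasEigenvector
    ⟨Module.End.mem_eigenspace_iff.mpr (by simpa using hKv), hv⟩

theorem posSemidef_sub_minEig [DecidableEq n] {K : Matrix n n ℂ} (hK : K.IsHermitian) :
    (K - (minEig K : ℂ) • 1).PosSemidef := by
  have hL : (K - (minEig K : ℂ) • 1).IsHermitian :=
    hK.sub (isHermitian_one.smul (Complex.conj_ofReal _))
  refine hL.posSemidef_iff_eigenvalues_nonneg.mpr fun i => ?_
  have hKv : K *ᵥ ⇑(hL.eigenvectorBasis i)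
      = ((hL.eigenvalues i + minEig K : ℝ) : ℂ) • ⇑(hL.eigenvectorBasis i) := by
    have := hL.mulVec_eigenvectorBasis i
    rw [sub_mulVec, smul_mulVec, one_mulVec, sub_eq_iff_eq_add] at this
    rw [this]
    simp only [Complex.ofReal_add, add_smul, Complex.coe_smul]
  have hv : (⇑(hL.eigenvectorBasis i) : n → ℂ) ≠ 0 :=
    (WithLp.ofLp_eq_zero 2).ne.mpr (hL.eigenvectorBasis.orthonormal.ne_zero i)
  have : minEig K ≤ hL.eigenvalues i + minEig K :=
    csInf_le (finite_setOf_eigenvalue K).bddBelow ⟨_, hv, hKv⟩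
  simpa using this

open Pointwise in
theorem minEig_neg (K : Matrix n n ℂ) : minEig (-K) = -maxEig K := by
  rw [minEig, maxEig, ← Real.sInf_neg]
  congr 1
  ext μ
  simp [neg_mulVec, neg_eq_iff_eq_neg]

open Pointwise in
theorem prodMin_neg {dA dB : ℕ} (K : Matrix (Fin dA × Fin dB) (Fin dA × Fin dB) ℂ) :
    prodMin (-K) = -prodMax K := by
  rw [prodMin, prodMax, ← Real.sInf_neg]
  congr 1
  ext r
  simp [neg_mulVec, neg_eq_iff_eq_neg]

open scoped MatrixOrder in
theorem eq_zero_of_minEig_eq_zero_of_maxEig_eq_zero [DecidableEq n] {K : Matrix n n ℂ}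
    (hK : K.IsHermitian) (hmin : minEig K = 0) (hmax : maxEig K = 0) : K = 0 := by
  have h₁ := posSemidef_sub_minEig hK
  have h₂ := posSemidef_sub_minEig hK.neg
  rw [hmin, Complex.ofReal_zero, zero_smul, sub_zero] at h₁
  rw [minEig_neg, hmax, neg_zero, Complex.ofReal_zero, zero_smul, sub_zero] at h₂
  exact le_antisymm (le_iff.mpr (by rwa [zero_sub])) (le_iff.mpr (by rwa [sub_zero]))

end Eigenvalues

section ProductNumericalRange

variable {dA dB : ℕ}

theorem star_dotProduct_self_eq_norm_sq {n : Type*} [Fintype n] (v : n → ℂ) :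
    star v ⬝ᵥ v = (‖WithLp.toLp 2 v‖ : ℂ) ^ 2 := by
  have := inner_self_eq_norm_sq_to_K (𝕜 := ℂ) (WithLp.toLp 2 v)
  rwa [EuclideanSpace.inner_toLp_toLp, dotProduct_comm] at this

theorem star_vecKron_dotProduct_self_of_norm_eq_one {α : Fin dA → ℂ} {β : Fin dB → ℂ}
    (hα : ‖WithLp.toLp 2 α‖ = 1) (hβ : ‖WithLp.toLp 2 β‖ = 1) :
    star (vecKron α β) ⬝ᵥ vecKron α β = 1 := by
  rw [star_vecKron_dotProduct_vecKron, star_dotProduct_self_eq_norm_sq α,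
    star_dotProduct_self_eq_norm_sq β, hα, hβ]
  norm_num

theorem exists_norm_eq_one_vecKron_eq {α : Fin dA → ℂ} {β : Fin dB → ℂ}
    (h : star (vecKron α β) ⬝ᵥ vecKron α β = 1) :
    ∃ α' β', ‖WithLp.toLp 2 α'‖ = 1 ∧ ‖WithLp.toLp 2 β'‖ = 1 ∧ vecKron α' β' = vecKron α β := by
  have hab : ‖WithLp.toLp 2 α‖ * ‖WithLp.toLp 2 β‖ = 1 := by
    rw [star_vecKron_dotProduct_vecKron, star_dotProduct_self_eq_norm_sq,
      star_dotProduct_self_eq_norm_sq, ← mul_pow] at h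
    exact (pow_eq_one_iff_of_nonneg (by positivity) two_ne_zero).mp (by exact_mod_cast h)
  have ha := left_ne_zero_of_mul_eq_one hab
  refine ⟨(‖WithLp.toLp 2 α‖⁻¹ : ℂ) • α, (‖WithLp.toLp 2 α‖ : ℂ) • β, ?_, ?_, ?_⟩
  · simp [WithLp.toLp_smul, norm_smul, ha]
  · simp [WithLp.toLp_smul, norm_smul, hab]
  · funext p
    simp only [vecKron, Pi.smul_apply, smul_eq_mul]
    field_simp

theorem exists_norm_eq_one_prodMin_eq [NeZero dA] [NeZero dB]
    (K : Matrix (Fin dA × Fin dB) (Fin dA × Fin dB) ℂ) :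
    ∃ α β, ‖WithLp.toLp 2 α‖ = 1 ∧ ‖WithLp.toLp 2 β‖ = 1 ∧
      (star (vecKron α β) ⬝ᵥ K *ᵥ vecKron α β).re = prodMin K := by
  set f : EuclideanSpace ℂ (Fin dA) × EuclideanSpace ℂ (Fin dB) → ℝ := fun q =>
    (star (vecKron q.1.ofLp q.2.ofLp) ⬝ᵥ K *ᵥ vecKron q.1.ofLp q.2.ofLp).re
  have hv : Continuous fun q : EuclideanSpace ℂ (Fin dA) × EuclideanSpace ℂ (Fin dB) =>
      vecKron q.1.ofLp q.2.ofLp :=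
    continuous_pi fun p => ((PiLp.continuous_apply 2 _ p.1).comp continuous_fst).mul
      ((PiLp.continuous_apply 2 _ p.2).comp continuous_snd)
  have hf : Continuous f :=
    Complex.continuous_re.comp (hv.star.dotProduct (continuous_const.matrix_mulVec hv))
  obtain ⟨q, hq, hmin⟩ := ((isCompact_sphere 0 1).prod (isCompact_sphere 0 1)).exists_isMinOn
    ((NormedSpace.sphere_nonempty.mpr zero_le_one).prod
      (NormedSpace.sphere_nonempty.mpr zero_le_one)) hf.continuousOn
  simp only [Set.mem_prod, mem_sphere_zero_iff_norm] at hq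
  have hlower : f q ∈ lowerBounds {r : ℝ | ∃ (α : Fin dA → ℂ) (β : Fin dB → ℂ),
      star (vecKron α β) ⬝ᵥ vecKron α β = 1 ∧
      (star (vecKron α β) ⬝ᵥ K *ᵥ vecKron α β).re = r} := by
    rintro r ⟨α, β, hunit, rfl⟩
    obtain ⟨α', β', hα', hβ', hαβ⟩ := exists_norm_eq_one_vecKron_eq hunit
    rw [← hαβ]
    exact isMinOn_iff.mp hmin (WithLp.toLp 2 α', WithLp.toLp 2 β')
      (by simpa [mem_sphere_zero_iff_norm] using And.intro hα' hβ')
  have hmem := star_vecKron_dotProduct_self_of_norm_eq_one hq.1 hq.2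
  exact ⟨q.1.ofLp, q.2.ofLp, hq.1, hq.2,
    le_antisymm (le_csInf ⟨_, _, _, hmem, rfl⟩ hlower) (csInf_le ⟨_, hlower⟩ ⟨_, _, hmem, rfl⟩)⟩

theorem exists_vecKron_eigenvector_of_prodMin_le [NeZero dA] [NeZero dB]
    {K : Matrix (Fin dA × Fin dB) (Fin dA × Fin dB) ℂ} (hK : K.IsHermitian)
    (hle : prodMin K ≤ minEig K) :
    ∃ α β, α ≠ 0 ∧ β ≠ 0 ∧ K *ᵥ vecKron α β = (minEig K : ℂ) • vecKron α β := by
  obtain ⟨α, β, hα, hβ, hval⟩ := exists_norm_eq_one_prodMin_eq K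
  have hpsd := posSemidef_sub_minEig hK
  have hunit := star_vecKron_dotProduct_self_of_norm_eq_one hα hβ
  have hform : star (vecKron α β) ⬝ᵥ (K - (minEig K : ℂ) • 1) *ᵥ vecKron α β
      = star (vecKron α β) ⬝ᵥ K *ᵥ vecKron α β - minEig K := by
    rw [sub_mulVec, smul_mulVec, one_mulVec, dotProduct_sub, dotProduct_smul, hunit, smul_eq_mul,
      mul_one]
  have hpos := hpsd.dotProduct_mulVec_nonneg (vecKron α β)
  have hzero : star (vecKron α β) ⬝ᵥ (K - (minEig K : ℂ) • 1) *ᵥ vecKron α β = 0 := by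
    refine le_antisymm (Complex.le_def.mpr ⟨?_, (Complex.le_def.mp hpos).2.symm⟩) hpos
    rw [hform, Complex.sub_re, hval, Complex.ofReal_re, Complex.zero_re]
    linarith
  have := (hpsd.dotProduct_mulVec_zero_iff _).mp hzero
  rw [sub_mulVec, smul_mulVec, one_mulVec, sub_eq_zero] at this
  refine ⟨α, β, ?_, ?_, this⟩ <;> rintro rfl <;> simp at hα hβ

end ProductNumericalRange

section Kronecker

theorem exists_eq_smul_of_kronecker_eq {R l m n p : Type*} [Field R] {A A' : Matrix l m R}
    {B B' : Matrix n p R} (h : A ⊗ₖ B = A' ⊗ₖ B') (hne : A ⊗ₖ B ≠ 0) : ∃ t : R, A' = t • A := by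
  obtain ⟨⟨i, j⟩, ⟨i', j'⟩, hij⟩ : ∃ x y, (A ⊗ₖ B) x y ≠ 0 := by
    by_contra! h0
    exact hne (Matrix.ext h0)
  have hentry (a : l) (b : m) : A a b * B j j' = A' a b * B' j j' :=
    congrFun₂ h (a, j) (b, j')
  have hB' : B' j j' ≠ 0 := by
    rintro h0
    rw [kroneckerMap_apply, hentry, h0, mul_zero] at hij
    exact hij rfl
  refine ⟨B j j' / B' j j', Matrix.ext fun a b => ?_⟩
  rw [Matrix.smul_apply, smul_eq_mul, div_mul_eq_mul_div, eq_div_iff hB', ← hentry, mul_comm]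

theorem Matrix.IsHermitian.kronecker {l m : Type*} {A : Matrix l l ℂ} {B : Matrix m m ℂ}
    (hA : A.IsHermitian) (hB : B.IsHermitian) : (A ⊗ₖ B).IsHermitian := by
  rw [IsHermitian, conjTranspose_kronecker, hA.eq, hB.eq]

variable {dA dB : ℕ} {A₁ A₂ : Matrix (Fin dA) (Fin dA) ℂ} {B₁ B₂ : Matrix (Fin dB) (Fin dB) ℂ}

theorem isHermitian_smul_kronecker_add (hA₁ : A₁.IsHermitian) (hA₂ : A₂.IsHermitian)
    (hB₁ : B₁.IsHermitian) (hB₂ : B₂.IsHermitian) (k₁ k₂ : ℝ) :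
    ((k₁ : ℂ) • (A₁ ⊗ₖ B₁) + (k₂ : ℂ) • (A₂ ⊗ₖ B₂)).IsHermitian :=
  ((hA₁.kronecker hB₁).smul (Complex.conj_ofReal k₁)).add
    ((hA₂.kronecker hB₂).smul (Complex.conj_ofReal k₂))

theorem smul_kronecker_add_smul_kronecker_ne_zero (hA₁ : A₁.IsHermitian)
    (hA : HasOnlyZeroJointEigenvalues A₁ A₂) {k₁ k₂ : ℂ} (hk₁ : k₁ ≠ 0)
    (hne : A₁ ⊗ₖ B₁ ≠ 0) : k₁ • (A₁ ⊗ₖ B₁) + k₂ • (A₂ ⊗ₖ B₂) ≠ 0 := by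
  intro h
  have heq : A₁ ⊗ₖ (k₁ • B₁) = A₂ ⊗ₖ (-k₂ • B₂) := by
    rw [kronecker_smul, kronecker_smul, eq_neg_of_add_eq_zero_left h, neg_smul]
  obtain ⟨t, ht⟩ :=
    exists_eq_smul_of_kronecker_eq heq (by rw [kronecker_smul]; exact smul_ne_zero hk₁ hne)
  exact hA.ne_smul hA₁ (by rintro rfl; simp at hne) t ht

end Kronecker

theorem minEig_smul_kronecker_add_eq_zero {dA dB : ℕ} [NeZero dA] [NeZero dB]
    {A₁ A₂ : Matrix (Fin dA) (Fin dA) ℂ} {B₁ B₂ : Matrix (Fin dB) (Fin dB) ℂ}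
    (hA₁ : A₁.IsHermitian) (hA₂ : A₂.IsHermitian) (hB₁ : B₁.IsHermitian) (hB₂ : B₂.IsHermitian)
    (hA : HasOnlyZeroJointEigenvalues A₁ A₂) (hB : HasOnlyZeroJointEigenvalues B₁ B₂)
    {k₁ k₂ : ℝ} (hk₁ : k₁ ≠ 0) (hk₂ : k₂ ≠ 0)
    (hle : prodMin ((k₁ : ℂ) • (A₁ ⊗ₖ B₁) + (k₂ : ℂ) • (A₂ ⊗ₖ B₂))
      ≤ minEig ((k₁ : ℂ) • (A₁ ⊗ₖ B₁) + (k₂ : ℂ) • (A₂ ⊗ₖ B₂))) :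
    minEig ((k₁ : ℂ) • (A₁ ⊗ₖ B₁) + (k₂ : ℂ) • (A₂ ⊗ₖ B₂)) = 0 := by
  obtain ⟨α, β, hα, hβ, hv⟩ := exists_vecKron_eigenvector_of_prodMin_le
    (isHermitian_smul_kronecker_add hA₁ hA₂ hB₁ hB₂ k₁ k₂) hle
  exact_mod_cast prodEigenvalue_eq_zero hA hB (by exact_mod_cast hk₁) (by exact_mod_cast hk₂)
    hα hβ hv

/-- If every common eigenvector of the Hermitian matrices `A₁, A₂`
corresponds to eigenvalue `0` for both, and likewise for `B₁, B₂`, and `A₁⊗B₁ ≠ 0` or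
`A₂⊗B₂ ≠ 0`, then for all nonzero reals `k₁, k₂`, setting `K = k₁ A₁⊗B₁ + k₂ A₂⊗B₂`,
either `λ_min(K) < λ⊗_min(K)` or `λ_max(K) > λ⊗_max(K)`. -/
theorem stmt6 {dA dB : ℕ}
    (A₁ A₂ : Matrix (Fin dA) (Fin dA) ℂ) (B₁ B₂ : Matrix (Fin dB) (Fin dB) ℂ)
    (hA₁ : A₁.IsHermitian) (hA₂ : A₂.IsHermitian)
    (hB₁ : B₁.IsHermitian) (hB₂ : B₂.IsHermitian)
    (hA : ∀ (α : Fin dA → ℂ) (a₁ a₂ : ℂ), α ≠ 0 →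
      A₁.mulVec α = a₁ • α → A₂.mulVec α = a₂ • α → a₁ = 0 ∧ a₂ = 0)
    (hB : ∀ (β : Fin dB → ℂ) (b₁ b₂ : ℂ), β ≠ 0 →
      B₁.mulVec β = b₁ • β → B₂.mulVec β = b₂ • β → b₁ = 0 ∧ b₂ = 0)
    (hne : A₁ ⊗ₖ B₁ ≠ 0 ∨ A₂ ⊗ₖ B₂ ≠ 0)
    (k₁ k₂ : ℝ) (hk : k₁ * k₂ ≠ 0) :
    minEig ((k₁ : ℂ) • (A₁ ⊗ₖ B₁) + (k₂ : ℂ) • (A₂ ⊗ₖ B₂))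
        < prodMin ((k₁ : ℂ) • (A₁ ⊗ₖ B₁) + (k₂ : ℂ) • (A₂ ⊗ₖ B₂)) ∨
      maxEig ((k₁ : ℂ) • (A₁ ⊗ₖ B₁) + (k₂ : ℂ) • (A₂ ⊗ₖ B₂))
        > prodMax ((k₁ : ℂ) • (A₁ ⊗ₖ B₁) + (k₂ : ℂ) • (A₂ ⊗ₖ B₂)) := by
  have hk₁ : k₁ ≠ 0 := left_ne_zero_of_mul hk
  have hk₂ : k₂ ≠ 0 := right_ne_zero_of_mul hk
  have : NeZero dA := ⟨by rintro rfl; rcases hne with h | h <;> exact h (ext fun p => p.1.elim0)⟩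
  have : NeZero dB := ⟨by rintro rfl; rcases hne with h | h <;> exact h (ext fun p => p.2.elim0)⟩
  set K := (k₁ : ℂ) • (A₁ ⊗ₖ B₁) + (k₂ : ℂ) • (A₂ ⊗ₖ B₂) with hK
  by_contra! h
  have hmin : minEig K = 0 := minEig_smul_kronecker_add_eq_zero hA₁ hA₂ hB₁ hB₂ hA hB hk₁ hk₂ h.1
  have hneg : -K = ((-k₁ : ℝ) : ℂ) • (A₁ ⊗ₖ B₁) + ((-k₂ : ℝ) : ℂ) • (A₂ ⊗ₖ B₂) := by
    simp only [hK, Complex.ofReal_neg, neg_smul, neg_add]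
  have hmax : maxEig K = 0 := by
    have := minEig_smul_kronecker_add_eq_zero hA₁ hA₂ hB₁ hB₂ hA hB (neg_ne_zero.mpr hk₁)
      (neg_ne_zero.mpr hk₂) (by rw [← hneg, prodMin_neg, minEig_neg]; linarith [h.2])
    rwa [← hneg, minEig_neg, neg_eq_zero] at this
  have hK0 : K = 0 := eq_zero_of_minEig_eq_zero_of_maxEig_eq_zero
    (isHermitian_smul_kronecker_add hA₁ hA₂ hB₁ hB₂ k₁ k₂) hmin hmax
  rcases hne with h₁ | h₂
  · exact smul_kronecker_add_smul_kronecker_ne_zero hA₁ hA (Complex.ofReal_ne_zero.mpr hk₁) h₁ hK0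
  · exact smul_kronecker_add_smul_kronecker_ne_zero hA₂ (HasOnlyZeroJointEigenvalues.symm hA)
      (Complex.ofReal_ne_zero.mpr hk₂) h₂ (by rwa [add_comm])
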